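/- For every n ∈ ℕ, the map ι^n_n : T_P^n 1̃ → T_P^n 1̃ is the identity on T_P^n 1̃. -/

import Mathlib

open CategoryTheory

/-- A commutative integral FL-algebra (residuated lattice): a bounded lattice with a
commutative monoid operation `*` whose unit `1` is the top element, together with a
residuated implication `himp` satisfying `a * b ≤ c ↔ b ≤ himp a c`. -/
class FLAlgebra (A : Type) extends Lattice A, BoundedOrder A, CommMonoid A where
  himp : A → A → A
  residuation : ∀ a b c : A, a * b ≤ c ↔ b ≤ himp a c
  one_eq_top : (1 : A) = ⊤

/-- A (unary) predicate lifting for a `Set`-endofunctor `T` with truth values in `A`: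
a natural transformation `Hom(-,A) ⇒ Hom(T(-),A)` where `Hom(-,A)` is the contravariant
hom-functor into `A`. -/
structure PredLifting (T : Type ⥤ Type) (A : Type) where
  app : ∀ S : Type, (S → A) → T.obj S → A
  naturality : ∀ {S S' : Type} (f : S → S') (X : S' → A),
    app S' X ∘ T.map (↾f) = app S (X ∘ f)

/-- The functor `T_P = EV_P × T`, where `EV_P` is the constant functor with value
`Hom(P,A)`. -/
def TP (P A : Type) (T : Type ⥤ Type) : Type ⥤ Type where
  obj S := (P → A) × T.obj S
  map f := ↾(fun x => (x.1, T.map f x.2))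
  map_id X := by ext x <;> simp
  map_comp f g := by ext x <;> simp

/-- Formulas of the many-valued coalgebraic modal language `ML`: constants `c̄` (`const`),
nullary modalities `◻_{λ^p}` (`prop`), binary connectives `∨, ∧, &, →`
(`or`, `and`, `conj`, `imp`), and unary modalities `◻_λ` (`box`), where `Λ` indexes
the predicate liftings. -/
inductive MLFormula (P A Λ : Type) : Type where
  | const : A → MLFormula P A Λ
  | prop : P → MLFormula P A Λ
  | or : MLFormula P A Λ → MLFormula P A Λ → MLFormula P A Λ
  | and : MLFormula P A Λ → MLFormula P A Λ → MLFormula P A Λ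
  | conj : MLFormula P A Λ → MLFormula P A Λ → MLFormula P A Λ
  | imp : MLFormula P A Λ → MLFormula P A Λ → MLFormula P A Λ
  | box : Λ → MLFormula P A Λ → MLFormula P A Λ

namespace MLFormula

/-- The modal rank of a formula: maximal nesting depth of unary modalities `◻_λ`.
`L_n` is the set of formulas of rank ≤ n. -/
def rank {P A Λ : Type} : MLFormula P A Λ → ℕ
  | const _ => 0
  | prop _ => 0
  | or φ ψ => max (rank φ) (rank ψ)
  | and φ ψ => max (rank φ) (rank ψ)
  | conj φ ψ => max (rank φ) (rank ψ)
  | imp φ ψ => max (rank φ) (rank ψ)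
  | box _ φ => rank φ + 1

/-- Application of a substitution `ρ : P → ML`, uniformly replacing each nullary
modality `◻_{λ^p}` by `ρ p`. -/
def subst {P A Λ : Type} (ρ : P → MLFormula P A Λ) : MLFormula P A Λ → MLFormula P A Λ
  | const c => const c
  | prop p => ρ p
  | or φ ψ => or (subst ρ φ) (subst ρ ψ)
  | and φ ψ => and (subst ρ φ) (subst ρ ψ)
  | conj φ ψ => conj (subst ρ φ) (subst ρ ψ)
  | imp φ ψ => imp (subst ρ φ) (subst ρ ψ)
  | box l φ => box l (subst ρ φ)

end MLFormula

/-- A `T`-model: a `T_P`-coalgebra `⟨S, σ_V⟩` where `σ_V s = (V s, σ s)` for a valuation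
`V : S → Hom(P,A)` and a `T`-coalgebra `σ : S → T S`. -/
structure TModel (T : Type ⥤ Type) (P A : Type) where
  S : Type
  V : S → P → A
  σ : S → T.obj S

variable {T : Type ⥤ Type} {P A Λ : Type}

/-- The semantics `‖φ‖_𝔠 : S → A` of a formula in a `T`-model, given an assignment
`lift` of predicate liftings to the modality indices in `Λ`. -/
def sem [FLAlgebra A] (lift : Λ → PredLifting T A) (M : TModel T P A) :
    MLFormula P A Λ → M.S → A
  | .const c, _ => c
  | .prop p, s => M.V s p
  | .or φ ψ, s => sem lift M φ s ⊔ sem lift M ψ s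
  | .and φ ψ, s => sem lift M φ s ⊓ sem lift M ψ s
  | .conj φ ψ, s => sem lift M φ s * sem lift M ψ s
  | .imp φ ψ, s => FLAlgebra.himp (sem lift M φ s) (sem lift M ψ s)
  | .box l φ, s => (lift l).app M.S (sem lift M φ) (M.σ s)

/-- The (pseudo-)terminal sequence: `T_P^0 1̃ = 1̃ = Hom(P,A) × 1` and
`T_P^{n+1} 1̃ = T_P (T_P^n 1̃)`. -/
def TPn (P A : Type) (T : Type ⥤ Type) : ℕ → Type :=
  Nat.rec ((P → A) × PUnit) (fun _ ih => (P → A) × T.obj ih)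

/-- `T_P^{n+1} 1̃` is (definitionally) `T_P` applied to `T_P^n 1̃`. -/
theorem TPn_succ (P A : Type) (T : Type ⥤ Type) (n : ℕ) :
    TPn P A T (n+1) = (TP P A T).obj (TPn P A T n) := rfl

/-- Every element of `T_P^n 1̃` has the form `⟨ν, δ⟩`; this extracts `ν : Hom(P,A)`. -/
def projV (P A : Type) (T : Type ⥤ Type) : (n : ℕ) → TPn P A T n → (P → A)
  | 0 => fun t => t.1
  | _+1 => fun t => t.1

/-- The `n`-step semantics `‖φ‖_n : T_P^n 1̃ → A` (well-behaved for `rank φ ≤ n`;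
the value of a box at level `0` is junk `1`). -/
def stepSem [FLAlgebra A] (lift : Λ → PredLifting T A) :
    MLFormula P A Λ → (n : ℕ) → TPn P A T n → A
  | .const c, _, _ => c
  | .prop p, n, t => projV P A T n t p
  | .or φ ψ, n, t => stepSem lift φ n t ⊔ stepSem lift ψ n t
  | .and φ ψ, n, t => stepSem lift φ n t ⊓ stepSem lift ψ n t
  | .conj φ ψ, n, t => stepSem lift φ n t * stepSem lift ψ n t
  | .imp φ ψ, n, t => FLAlgebra.himp (stepSem lift φ n t) (stepSem lift ψ n t)
  | .box l φ, n, t =>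
    (match (motive := (k : ℕ) → TPn P A T k → A) n with
      | 0 => fun _ => 1
      | m+1 => fun t => (lift l).app (TPn P A T m) (fun u => stepSem lift φ m u) t.2) t

/-- The maps `σ_k : S → T_P^k 1̃`: `σ_0 s = ⟨V s, •⟩` and `σ_{k+1} = T_P σ_k ∘ σ_V`. -/
def sigmaN (M : TModel T P A) : (k : ℕ) → M.S → TPn P A T k
  | 0 => fun s => (M.V s, PUnit.unit)
  | k+1 => fun s => (TP P A T).map (↾(sigmaN M k)) (M.V s, M.σ s)

/-- The canonical map `!'_{T_P^m 1̃} : T_P^m 1̃ → 1̃`, `⟨ν, δ⟩ ↦ ⟨ν, •⟩`. -/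
def bangTilde (P A : Type) (T : Type ⥤ Type) : (m : ℕ) → TPn P A T m → TPn P A T 0
  | 0 => fun t => (t.1, PUnit.unit)
  | _+1 => fun t => (t.1, PUnit.unit)

/-- `ι^n := T_P^n ι^0 : T_P^n 1̃ → T_P^{n+1} 1̃`, for a given `ι^0 : 1̃ → T_P 1̃`. -/
def iotaN (P A : Type) (T : Type ⥤ Type) (ι0 : TPn P A T 0 → TPn P A T 1) :
    (n : ℕ) → TPn P A T n → TPn P A T (n+1)
  | 0 => ι0
  | n+1 => ⇑((TP P A T).map (↾(iotaN P A T ι0 n)))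

/-- `ι^n_k : T_P^n 1̃ → T_P^k 1̃`: `ι^n_0 ⟨ν,δ⟩ = ⟨ν,•⟩` and
`ι^n_{k+1} = T_P ι^n_k ∘ ι^n`. -/
def iotaNK (P A : Type) (T : Type ⥤ Type) (ι0 : TPn P A T 0 → TPn P A T 1) (n : ℕ) :
    (k : ℕ) → TPn P A T n → TPn P A T k
  | 0 => bangTilde P A T n
  | k+1 => ⇑((TP P A T).map (↾(iotaNK P A T ι0 n k))) ∘ iotaN P A T ι0 n

/-- `T_P^k (!'_{T_P^m 1̃}) : T_P^{m+k} 1̃ → T_P^k 1̃`: the `k`-fold application of the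
functor `T_P` to the canonical map `!'_{T_P^m 1̃} : T_P^m 1̃ → 1̃`. -/
def liftedBang (P A : Type) (T : Type ⥤ Type) (m : ℕ) :
    (k : ℕ) → TPn P A T (m + k) → TPn P A T k
  | 0 => bangTilde P A T m
  | k+1 => ⇑((TP P A T).map (↾(liftedBang P A T m k)))

/-- The `T`-model `⟨T_P^n 1̃, ι^n⟩`. -/
def terminalModel (P A : Type) (T : Type ⥤ Type) (ι0 : TPn P A T 0 → TPn P A T 1)
    (n : ℕ) : TModel T P A where
  S := TPn P A T n
  V t := (iotaN P A T ι0 n t).1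
  σ t := (iotaN P A T ι0 n t).2

/-- Semantic consequence `Γ ⊩ φ` over all `T`-models. -/
def SemConseq [FLAlgebra A] (lift : Λ → PredLifting T A)
    (Γ : Set (MLFormula P A Λ)) (φ : MLFormula P A Λ) : Prop :=
  ∀ (M : TModel T P A) (s : M.S), (∀ γ ∈ Γ, sem lift M γ s = 1) → sem lift M φ s = 1

/-- Step-`n` semantic consequence `Γ ⊩_n φ` over the terminal sequence. -/
def StepConseq [FLAlgebra A] (lift : Λ → PredLifting T A) (n : ℕ)
    (Γ : Set (MLFormula P A Λ)) (φ : MLFormula P A Λ) : Prop :=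
  ∀ t : TPn P A T n, (∀ γ ∈ Γ, stepSem lift γ n t = 1) → stepSem lift φ n t = 1

/-- Image of a finite set of formulas under a map (with classical decidable equality). -/
noncomputable def fimg {α β : Type} (f : α → β) (s : Finset α) : Finset β :=
  @Finset.image _ _ (Classical.decEq β) f s

/-- The general consequence relation `L`: the least set of consecutions containing
`Ax(𝔸)`, all substitution instances of `Ax(Λ)`, and closed under the monotonicity
rule `Γ ⊢ φ ⟹ ◻_λΓ ⊢ ◻_λφ`. -/
inductive GenL (AxA AxL : Finset (MLFormula P A Λ) → MLFormula P A Λ → Prop) :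
    Finset (MLFormula P A Λ) → MLFormula P A Λ → Prop where
  | axA {Γ φ} : AxA Γ φ → GenL AxA AxL Γ φ
  | axL {Γ φ} (ρ : P → MLFormula P A Λ) : AxL Γ φ →
      GenL AxA AxL (fimg (MLFormula.subst ρ) Γ) (MLFormula.subst ρ φ)
  | mono {Γ φ} (l : Λ) : GenL AxA AxL Γ φ →
      GenL AxA AxL (fimg (MLFormula.box l) Γ) (MLFormula.box l φ)

/-- The step-`n` consequence relations `L_n`: `L_0` is `Ax(𝔸)`-derivability restricted to
rank-0 consecutions; `L_{n+1}` is the least set of consecutions among `L_{n+1}`-formulas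
containing `Ax(𝔸)`-derivations, `n`-substitution instances of `Ax(Λ)`, and closed under
`Γ ⊢_{L_n} φ ⟹ ◻_λΓ ⊢_{L_{n+1}} ◻_λφ`. -/
inductive StepL (AxA AxL : Finset (MLFormula P A Λ) → MLFormula P A Λ → Prop) :
    ℕ → Finset (MLFormula P A Λ) → MLFormula P A Λ → Prop where
  | axA {n Γ φ} : (∀ γ ∈ Γ, MLFormula.rank γ ≤ n) → MLFormula.rank φ ≤ n →
      AxA Γ φ → StepL AxA AxL n Γ φ
  | axL {n Γ φ} (ρ : P → MLFormula P A Λ) : (∀ p, MLFormula.rank (ρ p) ≤ n) →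
      AxL Γ φ →
      StepL AxA AxL (n+1) (fimg (MLFormula.subst ρ) Γ) (MLFormula.subst ρ φ)
  | mono {n Γ φ} (l : Λ) : StepL AxA AxL n Γ φ →
      StepL AxA AxL (n+1) (fimg (MLFormula.box l) Γ) (MLFormula.box l φ)

/-- The `α`-cut of an `A`-valued fuzzy subset `f : X → A`. -/
def alphaCut {A : Type} [FLAlgebra A] {X : Type} (f : X → A) (α : A) : Set X :=
  {x | α ≤ f x}

/-- `F ⊑_α G` for families of `A`-valued fuzzy subsets of the same universe. -/
def famLe {A : Type} [FLAlgebra A] {X : Type} (F G : Set (X → A)) (α : A) : Prop :=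
  (⋂ f ∈ F, alphaCut f α) ⊆ ⋃ g ∈ G, alphaCut g α

/-- A predicate lifting is `α`-preserving if it preserves `⊑_α` between families of
fuzzy subsets. -/
def preservesAt [FLAlgebra A] (lam : PredLifting T A) (α : A) : Prop :=
  ∀ (S : Type) (F G : Set (S → A)), famLe F G α →
    famLe ((fun f => lam.app S f) '' F) ((fun f => lam.app S f) '' G) α

/-- `⊢_{L_n}` is sound w.r.t. `⊩_n`: for finite `Γ ∪ {φ} ⊆ L_n`, `Γ ⊢_{L_n} φ`
implies `Γ ⊩_n φ`. -/
def SoundAt [FLAlgebra A] (lift : Λ → PredLifting T A)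
    (AxA AxL : Finset (MLFormula P A Λ) → MLFormula P A Λ → Prop) (n : ℕ) : Prop :=
  ∀ (Γ : Finset (MLFormula P A Λ)) (φ : MLFormula P A Λ),
    (∀ γ ∈ Γ, MLFormula.rank γ ≤ n) → MLFormula.rank φ ≤ n →
    StepL AxA AxL n Γ φ → StepConseq lift n ↑Γ φ

/-- `⊢_{L_n}` is complete w.r.t. `⊩_n`: for finite `Γ ∪ {φ} ⊆ L_n`, `Γ ⊩_n φ`
implies `Γ ⊢_{L_n} φ`. -/
def CompleteAt [FLAlgebra A] (lift : Λ → PredLifting T A)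
    (AxA AxL : Finset (MLFormula P A Λ) → MLFormula P A Λ → Prop) (n : ℕ) : Prop :=
  ∀ (Γ : Finset (MLFormula P A Λ)) (φ : MLFormula P A Λ),
    (∀ γ ∈ Γ, MLFormula.rank γ ≤ n) → MLFormula.rank φ ≤ n →
    StepConseq lift n ↑Γ φ → StepL AxA AxL n Γ φ

/-- `⊢_L` is one-step sound: for every `n > 0`, soundness of `⊢_{L_{n-1}}` w.r.t.
`⊩_{n-1}` implies soundness of `⊢_{L_n}` w.r.t. `⊩_n`. -/
def OneStepSound [FLAlgebra A] (lift : Λ → PredLifting T A)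
    (AxA AxL : Finset (MLFormula P A Λ) → MLFormula P A Λ → Prop) : Prop :=
  ∀ n : ℕ, SoundAt lift AxA AxL n → SoundAt lift AxA AxL (n+1)

/-- `⊢_L` is one-step complete: for every `n > 0`, completeness of `⊢_{L_{n-1}}` w.r.t.
`⊩_{n-1}` implies completeness of `⊢_{L_n}` w.r.t. `⊩_n`. -/
def OneStepComplete [FLAlgebra A] (lift : Λ → PredLifting T A)
    (AxA AxL : Finset (MLFormula P A Λ) → MLFormula P A Λ → Prop) : Prop :=
  ∀ n : ℕ, CompleteAt lift AxA AxL n → CompleteAt lift AxA AxL (n+1)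

theorem CategoryTheory.Functor.map_ofHom_comp_map_ofHom (F : Type ⥤ Type) {X Y Z : Type}
    (f : X → Y) (g : Y → Z) :
    ⇑(F.map (↾g)) ∘ ⇑(F.map (↾f)) = ⇑(F.map (↾(g ∘ f))) :=
  funext fun x => (F.map_comp_apply (↾f) (↾g) x).symm

theorem CategoryTheory.Functor.map_ofHom_id (F : Type ⥤ Type) (X : Type) :
    ⇑(F.map (↾(id : X → X))) = id :=
  funext (F.map_id_apply X)

section TerminalSequence

variable {P A : Type} {T : Type ⥤ Type}

/-- The case `n = k = 0` is `γ^0 ∘ ι^0 = id`; the inductive step is functoriality of `T_P`,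
as `ι^{n+1} = T_P ι^n`. -/
theorem iotaNK_succ_comp_iotaN (ι0 : TPn P A T 0 → TPn P A T 1)
    (hι0 : bangTilde P A T 1 ∘ ι0 = id) (n k : ℕ) :
    iotaNK P A T ι0 (n + 1) k ∘ iotaN P A T ι0 n = iotaNK P A T ι0 n k := by
  induction k generalizing n with
  | zero =>
    cases n with
    | zero => exact hι0
    | succ m => rfl
  | succ k ih =>
    have hmap : ⇑((TP P A T).map (↾(iotaNK P A T ι0 (n + 1) k)))
          ∘ ⇑((TP P A T).map (↾(iotaN P A T ι0 n)))
        = ⇑((TP P A T).map (↾(iotaNK P A T ι0 n k))) := by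
      rw [Functor.map_ofHom_comp_map_ofHom, ih]
    exact congrArg (· ∘ iotaN P A T ι0 n) hmap

end TerminalSequence

theorem iotaNK_self_eq_id_general (P A : Type) (T : Type ⥤ Type)
    (ι0 : TPn P A T 0 → TPn P A T 1)
    (hι0 : bangTilde P A T 1 ∘ ι0 = id)
    (n : ℕ) :
    iotaNK P A T ι0 n n = id := by
  induction n with
  | zero => rfl
  | succ n ih =>
    change ⇑((TP P A T).map (↾(iotaNK P A T ι0 (n + 1) n)))
        ∘ ⇑((TP P A T).map (↾(iotaN P A T ι0 n))) = id
    rw [Functor.map_ofHom_comp_map_ofHom, iotaNK_succ_comp_iotaN ι0 hι0, ih,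
      Functor.map_ofHom_id]

/-- For every `n ∈ ℕ`, the map `ι^n_n : T_P^n 1̃ → T_P^n 1̃` is the identity
on `T_P^n 1̃`. -/
theorem iotaNK_self_eq_id (P A : Type) (T : Type ⥤ Type)
    (hT : ∃ S : Type, Nonempty (T.obj S))
    (ι0 : TPn P A T 0 → TPn P A T 1)
    (hι0 : bangTilde P A T 1 ∘ ι0 = id)
    (n : ℕ) :
    iotaNK P A T ι0 n n = id :=
  iotaNK_self_eq_id_general P A T ι0 hι0 n
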